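/- For any weight matrices W₀, …, W_ℓ and any diagonal matrices D_r with diagonal entries in [0,1], one has ‖W_ℓ D_ℓ W_{ℓ-1} D_{ℓ-1} ⋯ D₁ W₀‖ ≤ K₁, where K₁ = (1/2^ℓ) Σ over all subsets {r₁ < r₂ < ⋯ < r_n} of {1,…,ℓ} of ‖W_{(ℓ+1,r_n)}‖ ‖W_{(r_n,r_{n-1})}‖ ⋯ ‖W_{(r₂,r₁)}‖ ‖W_{(r₁,0)}‖ (the Combettes–Pesquet bound). -/

import Mathlib

/-- Entrywise absolute value of a matrix. -/
def entAbs {m n : ℕ} (A : Matrix (Fin m) (Fin n) ℝ) : Matrix (Fin m) (Fin n) ℝ :=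
  fun i j => |A i j|

/-- The chunk product `W (s+k) * ⋯ * W (s+1) * W s`. -/
def Wchunk (a : ℕ → ℕ) (W : ∀ r : ℕ, Matrix (Fin (a (r+1))) (Fin (a r)) ℝ) (s : ℕ) :
    (k : ℕ) → Matrix (Fin (a (s + k + 1))) (Fin (a s)) ℝ
  | 0 => W s
  | k+1 => W (s + k + 1) * Wchunk a W s k

/-- The chunk product `W_{(t,s)} = W (t-1) * ⋯ * W s` for `s < t`, cast to its natural type. -/
def Wts (a : ℕ → ℕ) (W : ∀ r : ℕ, Matrix (Fin (a (r+1))) (Fin (a r)) ℝ) (s t : ℕ) :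
    Matrix (Fin (a t)) (Fin (a s)) ℝ :=
  if h : s < t then
    (Wchunk a W s (t - s - 1)).submatrix
      (Fin.cast (congrArg a (by omega : t = s + (t - s - 1) + 1))) id
  else 0

/-- Given a decreasing list `[r_n, …, r_1]` of cut points, the product
`nn (W_{(t,r_n)}) * nn (W_{(r_n,r_{n-1})}) * ⋯ * nn (W_{(r_1,0)})` of chunk norms. -/
noncomputable def chunkNormProd (a : ℕ → ℕ)
    (W : ∀ r : ℕ, Matrix (Fin (a (r+1))) (Fin (a r)) ℝ)
    (nn : ∀ m n : ℕ, Matrix (Fin m) (Fin n) ℝ → ℝ) : ℕ → List ℕ → ℝ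
  | t, [] => nn (a t) (a 0) (Wts a W 0 t)
  | t, r :: rest => nn (a t) (a r) (Wts a W r t) * chunkNormProd a W nn r rest

/-- The Combettes–Pesquet bound `K₁`, for the norm `nn`. -/
noncomputable def K1 (a : ℕ → ℕ) (W : ∀ r : ℕ, Matrix (Fin (a (r+1))) (Fin (a r)) ℝ)
    (nn : ∀ m n : ℕ, Matrix (Fin m) (Fin n) ℝ → ℝ) (ℓ : ℕ) : ℝ :=
  (1 / 2 ^ ℓ) * ∑ S ∈ (Finset.Icc 1 ℓ).powerset,
    chunkNormProd a W nn (ℓ + 1) ((S.sort (· ≤ ·)).reverse)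

/-- Given a decreasing list `[r_n, …, r_1]` of cut points, the matrix product
`W_{(t,r_n)}^abs * W_{(r_n,r_{n-1})}^abs * ⋯ * W_{(r_1,0)}^abs`. -/
noncomputable def chunkAbsProd (a : ℕ → ℕ)
    (W : ∀ r : ℕ, Matrix (Fin (a (r+1))) (Fin (a r)) ℝ) :
    (t : ℕ) → List ℕ → Matrix (Fin (a t)) (Fin (a 0)) ℝ
  | t, [] => entAbs (Wts a W 0 t)
  | t, r :: rest => entAbs (Wts a W r t) * chunkAbsProd a W r rest

/-- The bound `K₄`, for the norm `nn`. -/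
noncomputable def K4 (a : ℕ → ℕ) (W : ∀ r : ℕ, Matrix (Fin (a (r+1))) (Fin (a r)) ℝ)
    (nn : ∀ m n : ℕ, Matrix (Fin m) (Fin n) ℝ → ℝ) (ℓ : ℕ) : ℝ :=
  (1 / 2 ^ ℓ) * ∑ S ∈ (Finset.Icc 1 ℓ).powerset,
    nn (a (ℓ+1)) (a 0) (chunkAbsProd a W (ℓ + 1) ((S.sort (· ≤ ·)).reverse))

/-- The product `W ℓ * D ℓ * W (ℓ-1) * D (ℓ-1) * ⋯ * D 1 * W 0`. -/
def chainWD (a : ℕ → ℕ) (W : ∀ r : ℕ, Matrix (Fin (a (r+1))) (Fin (a r)) ℝ)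
    (D : ∀ r : ℕ, Matrix (Fin (a r)) (Fin (a r)) ℝ) :
    (k : ℕ) → Matrix (Fin (a (k+1))) (Fin (a 0)) ℝ
  | 0 => W 0
  | k+1 => W (k+1) * (D (k+1) * chainWD a W D k)

/-!
Writing `D r = (1 + Z r) / 2` with `Z r = 2 • D r - 1`, which is diagonal with entries in
`[-1, 1]` and hence has norm at most `1`, and multiplying out the chain gives
`W ℓ D ℓ ⋯ D 1 W 0 = 2⁻ˡ ∑_S W_{(ℓ+1,r_n)} Z r_n W_{(r_n,r_{n-1})} ⋯ Z r_1 W_{(r_1,0)}`,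
the sum running over the subsets `S = {r_1 < ⋯ < r_n}` of `{1, …, ℓ}`. The triangle inequality
and submultiplicativity bound each summand by the corresponding product of chunk norms.
-/

theorem Finset.sort_le_reverse {α : Type*} [LinearOrder α] (s : Finset α) :
    (s.sort (· ≤ ·)).reverse = s.sort (· ≥ ·) := by
  have hnodup : (s.sort (· ≤ ·)).reverse.Nodup := List.nodup_reverse.mpr (s.sort_nodup _)
  have hsorted : (s.sort (· ≤ ·)).reverse.Pairwise (· ≥ ·) :=
    List.pairwise_reverse.mpr (s.pairwise_sort _)
  have := (List.toFinset_sort (· ≥ ·) hnodup).mpr hsorted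
  rw [List.toFinset_reverse, Finset.sort_toFinset] at this
  exact this.symm

section ChunkProducts

variable {a : ℕ → ℕ} {W : ∀ r : ℕ, Matrix (Fin (a (r+1))) (Fin (a r)) ℝ}

theorem Wchunk_submatrix_cast {s k k' : ℕ} (hk : k = k') (h : a (s + k' + 1) = a (s + k + 1)) :
    (Wchunk a W s k).submatrix (Fin.cast h) id = Wchunk a W s k' := by
  subst hk
  rfl

theorem Wts_add_add_one (s k : ℕ) : Wts a W s (s + k + 1) = Wchunk a W s k := by
  rw [Wts, dif_pos (by omega)]
  exact Wchunk_submatrix_cast (by omega) _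

theorem Wts_add_one (s : ℕ) : Wts a W s (s + 1) = W s :=
  Wts_add_add_one s 0

theorem Wts_succ {s t : ℕ} (h : s < t) : Wts a W s (t + 1) = W t * Wts a W s t := by
  obtain ⟨k, rfl⟩ : ∃ k, t = s + k + 1 := ⟨t - s - 1, by omega⟩
  rw [Wts_add_add_one]
  exact Wts_add_add_one s (k + 1)

variable (a W) in
def chunkZProd (Z : ∀ r : ℕ, Matrix (Fin (a r)) (Fin (a r)) ℝ) :
    (t : ℕ) → List ℕ → Matrix (Fin (a t)) (Fin (a 0)) ℝ
  | t, [] => Wts a W 0 t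
  | t, r :: rest => Wts a W r t * (Z r * chunkZProd Z r rest)

variable {Z : ∀ r : ℕ, Matrix (Fin (a r)) (Fin (a r)) ℝ}

theorem mul_chunkZProd {t : ℕ} {L : List ℕ} (ht : 0 < t) (hL : ∀ r ∈ L, r < t) :
    W t * chunkZProd a W Z t L = chunkZProd a W Z (t + 1) L := by
  cases L with
  | nil => exact (Wts_succ ht).symm
  | cons r rest =>
    simp only [chunkZProd, ← Matrix.mul_assoc, Wts_succ (hL r List.mem_cons_self)]

theorem mul_mul_chunkZProd (t : ℕ) (L : List ℕ) :
    W t * (Z t * chunkZProd a W Z t L) = chunkZProd a W Z (t + 1) (t :: L) := by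
  rw [chunkZProd, Wts_add_one]

theorem chainWD_eq_sum_chunkZProd {D : ∀ r : ℕ, Matrix (Fin (a r)) (Fin (a r)) ℝ}
    (hDZ : ∀ r, D r = (1 / 2 : ℝ) • (1 + Z r)) (ℓ : ℕ) :
    chainWD a W D ℓ = (1 / 2 ^ ℓ : ℝ) • ∑ S ∈ (Finset.Icc 1 ℓ).powerset,
      chunkZProd a W Z (ℓ + 1) ((S.sort (· ≤ ·)).reverse) := by
  induction ℓ with
  | zero => simp [chainWD, chunkZProd, Wts_add_one]
  | succ ℓ ih =>
    have hIcc : Finset.Icc 1 (ℓ + 1) = insert (ℓ + 1) (Finset.Icc 1 ℓ) :=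
      (Finset.insert_Icc_right_eq_Icc_add_one (by omega)).symm
    have hlt {S : Finset ℕ} (hS : S ∈ (Finset.Icc 1 ℓ).powerset) : ∀ r ∈ S, r < ℓ + 1 :=
      fun r hr => by have := Finset.mem_Icc.mp (Finset.mem_powerset.mp hS hr); omega
    have hsort {S : Finset ℕ} (hS : S ∈ (Finset.Icc 1 ℓ).powerset) :
        ((insert (ℓ + 1) S).sort (· ≤ ·)).reverse = (ℓ + 1) :: (S.sort (· ≤ ·)).reverse := by
      simp only [Finset.sort_le_reverse]
      exact Finset.sort_insert _ (fun r hr => (hlt hS r hr).le) (fun h => by simpa using hlt hS _ h)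
    rw [hIcc, Finset.sum_powerset_insert (by simp), chainWD, hDZ, ih]
    have h1 : ∀ S ∈ (Finset.Icc 1 ℓ).powerset,
        W (ℓ + 1) * chunkZProd a W Z (ℓ + 1) ((S.sort (· ≤ ·)).reverse) =
          chunkZProd a W Z (ℓ + 1 + 1) ((S.sort (· ≤ ·)).reverse) := fun S hS =>
      mul_chunkZProd (by omega) (by simpa [Finset.mem_sort] using hlt hS)
    have h2 : ∀ S ∈ (Finset.Icc 1 ℓ).powerset,
        W (ℓ + 1) * (Z (ℓ + 1) * chunkZProd a W Z (ℓ + 1) ((S.sort (· ≤ ·)).reverse)) =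
          chunkZProd a W Z (ℓ + 1 + 1) ((insert (ℓ + 1) S).sort (· ≤ ·)).reverse :=
      fun S hS => by rw [hsort hS, mul_mul_chunkZProd]
    simp only [Matrix.smul_mul, Matrix.mul_smul, Matrix.add_mul, Matrix.one_mul, Matrix.mul_add,
      Matrix.mul_sum]
    rw [← Finset.sum_congr rfl h1, ← Finset.sum_congr rfl h2, ← Finset.sum_add_distrib,
      ← Finset.smul_sum, smul_smul]
    congr 1
    ring

end ChunkProducts

section ChunkNorms

variable {a : ℕ → ℕ} {W : ∀ r : ℕ, Matrix (Fin (a (r+1))) (Fin (a r)) ℝ}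
  {nn : ∀ m n : ℕ, Matrix (Fin m) (Fin n) ℝ → ℝ}

theorem chunkZProd_norm_le (hnonneg : ∀ m n (A : Matrix (Fin m) (Fin n) ℝ), 0 ≤ nn m n A)
    (hmul : ∀ m n p (A : Matrix (Fin m) (Fin n) ℝ) (B : Matrix (Fin n) (Fin p) ℝ),
      nn m p (A * B) ≤ nn m n A * nn n p B)
    {Z : ∀ r : ℕ, Matrix (Fin (a r)) (Fin (a r)) ℝ} (hZ : ∀ r, nn (a r) (a r) (Z r) ≤ 1) :
    ∀ (t : ℕ) (L : List ℕ), nn (a t) (a 0) (chunkZProd a W Z t L) ≤ chunkNormProd a W nn t L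
  | _, [] => le_rfl
  | t, r :: rest => by
    have ih := chunkZProd_norm_le hnonneg hmul hZ r rest
    calc nn (a t) (a 0) (Wts a W r t * (Z r * chunkZProd a W Z r rest))
        ≤ nn (a t) (a r) (Wts a W r t) * (nn (a r) (a r) (Z r) * nn (a r) (a 0)
            (chunkZProd a W Z r rest)) :=
          (hmul _ _ _ _ _).trans (by gcongr; exacts [hnonneg _ _ _, hmul _ _ _ _ _])
      _ ≤ nn (a t) (a r) (Wts a W r t) * (1 * chunkNormProd a W nn r rest) := by
          gcongr
          exacts [hnonneg _ _ _, hnonneg _ _ _, hZ r]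
      _ = chunkNormProd a W nn t (r :: rest) := by rw [one_mul, chunkNormProd]

end ChunkNorms

/-- Combettes–Pesquet bound: for any operator norm `nn` (subadditive, absolutely
homogeneous, submultiplicative, with `nn Z ≤ 1` for diagonal `Z` with entries in `[-1,1]`)
and any diagonal matrices `D r` with entries in `[0,1]`,
`‖W ℓ D ℓ ⋯ D 1 W 0‖ ≤ K₁`. -/
theorem chain_norm_le_K1
    (a : ℕ → ℕ) (ℓ : ℕ) (W : ∀ r : ℕ, Matrix (Fin (a (r+1))) (Fin (a r)) ℝ)
    (nn : ∀ m n : ℕ, Matrix (Fin m) (Fin n) ℝ → ℝ)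
    (hnonneg : ∀ m n (A : Matrix (Fin m) (Fin n) ℝ), 0 ≤ nn m n A)
    (hadd : ∀ m n (A B : Matrix (Fin m) (Fin n) ℝ), nn m n (A + B) ≤ nn m n A + nn m n B)
    (hsmul : ∀ m n (c : ℝ) (A : Matrix (Fin m) (Fin n) ℝ), nn m n (c • A) = |c| * nn m n A)
    (hmul : ∀ m n p (A : Matrix (Fin m) (Fin n) ℝ) (B : Matrix (Fin n) (Fin p) ℝ),
      nn m p (A * B) ≤ nn m n A * nn n p B)
    (hdiag : ∀ k (Z : Matrix (Fin k) (Fin k) ℝ),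
      (∀ i j, i ≠ j → Z i j = 0) → (∀ i, |Z i i| ≤ 1) → nn k k Z ≤ 1)
    (D : ∀ r : ℕ, Matrix (Fin (a r)) (Fin (a r)) ℝ)
    (hD0 : ∀ r i j, i ≠ j → D r i j = 0)
    (hD1 : ∀ r i, D r i i ∈ Set.Icc (0:ℝ) 1) :
    nn (a (ℓ+1)) (a 0) (chainWD a W D ℓ) ≤ K1 a W nn ℓ := by
  set Z : ∀ r : ℕ, Matrix (Fin (a r)) (Fin (a r)) ℝ := fun r => (2 : ℝ) • D r - 1
  have hZ (r : ℕ) : nn (a r) (a r) (Z r) ≤ 1 := by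
    refine hdiag _ _ (fun i j hij => by simp [Z, hD0 r i j hij, hij]) (fun i => ?_)
    obtain ⟨h0, h1⟩ := hD1 r i
    simp only [Z, Matrix.sub_apply, Matrix.smul_apply, Matrix.one_apply_eq, smul_eq_mul]
    exact abs_le.mpr ⟨by linarith, by linarith⟩
  have hDZ (r : ℕ) : D r = (1 / 2 : ℝ) • (1 + Z r) := by simp only [Z]; module
  have hzero : nn (a (ℓ+1)) (a 0) 0 ≤ 0 := by simpa using (hsmul (a (ℓ+1)) (a 0) 0 0).le
  rw [chainWD_eq_sum_chunkZProd hDZ, hsmul, abs_of_pos (by positivity), K1]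
  gcongr
  exact (Finset.le_sum_of_subadditive _ hzero (hadd _ _) _ _).trans
    (Finset.sum_le_sum fun S _ => chunkZProd_norm_le hnonneg hmul hZ _ _)
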